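/- For all real x, y, z: x^4+y^4+z^4 - (1/2)(x^3y+y^3z+z^3x+xy^3+yz^3+zx^3) - (3/4)(x^2y^2+y^2z^2+z^2x^2) + (3/4)·xyz(x+y+z) ≥ 0. -/
import Mathlib

theorem stmt_6 (x y z : ℝ) :
    0 ≤ (x^4+y^4+z^4) - (1/2)*(x^3*y+y^3*z+z^3*x+x*y^3+y*z^3+z*x^3) - (3/4)*(x^2*y^2+y^2*z^2+z^2*x^2) + (3/4)*(x*y*z*(x+y+z)) := by
  nlinarith [sq_nonneg (x^2 - y^2/2 - z^2/2 - x*y/4 + y*z/2 - z*x/4),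
    sq_nonneg (y^2 - z^2 - x*y/2 + z*x/2)]
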